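/- For every integer n ≥ 9, the graph C²ₙ contains W₆ as a minor. -/
import Mathlib


open SimpleGraph

/-- `H` is a minor of `G`: there is a family of nonempty, pairwise disjoint,
connected branch sets in `G`, one for each vertex of `H`, such that adjacent
vertices of `H` have branch sets joined by an edge of `G`. -/
def SimpleGraph.IsMinorOf {W V : Type*} (H : SimpleGraph W) (G : SimpleGraph V) : Prop :=
  ∃ φ : W → Set V,
    (∀ w, (φ w).Nonempty) ∧
    (∀ w, (G.induce (φ w)).Connected) ∧
    (Pairwise fun w₁ w₂ => Disjoint (φ w₁) (φ w₂)) ∧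
    (∀ ⦃w₁ w₂⦄, H.Adj w₁ w₂ → ∃ a ∈ φ w₁, ∃ b ∈ φ w₂, G.Adj a b)

/-- The wheel `Wₙ`: a hub (`none`) joined to every vertex of a cycle of length `n`. -/
def wheel (n : ℕ) : SimpleGraph (Option (ZMod n)) :=
  SimpleGraph.fromRel fun a b =>
    (a = none ∧ b ≠ none) ∨ (∃ i j : ZMod n, a = some i ∧ b = some j ∧ j = i + 1)

/-- The square `C²ₙ` of the `n`-cycle. -/
def cycleSq (n : ℕ) : SimpleGraph (ZMod n) :=
  SimpleGraph.fromRel fun i j => j = i + 1 ∨ j = i + 2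

lemma chain_connected {V : Type*} (G : SimpleGraph V) (f : ℕ → V) (k : ℕ)
    (hadj : ∀ i < k, G.Adj (f i) (f (i+1))) :
    (G.induce (f '' Set.Iic k)).Connected := by
  rw [connected_iff]
  have key : ∀ i, ∀ hi : i ≤ k, (G.induce (f '' Set.Iic k)).Reachable ⟨f 0, ⟨0, by simp, rfl⟩⟩
      ⟨f i, ⟨i, Set.mem_Iic.mpr hi, rfl⟩⟩ := by
    intro i hi
    induction i with
    | zero => exact Reachable.refl _
    | succ j ih =>
      refine (ih (by omega)).trans (Adj.reachable ?_)
      simp only [comap_adj, Function.Embedding.coe_subtype]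
      exact hadj j (by omega)
  constructor
  · rintro ⟨x, i, hi, rfl⟩ ⟨y, j, hj, rfl⟩
    exact (key i hi).symm.trans (key j hj)
  · exact ⟨⟨f 0, ⟨0, by simp, rfl⟩⟩⟩

lemma cne {n : ℕ} [NeZero n] {a b : ℕ} (ha : a < n) (hb : b < n) (h : a ≠ b) :
    (a : ZMod n) ≠ (b : ZMod n) := fun e =>
  h (by rw [← ZMod.val_cast_of_lt ha, e, ZMod.val_cast_of_lt hb])

lemma cadj {n : ℕ} {x y : ZMod n} (hne : x ≠ y) (h : y = x + 1 ∨ y = x + 2) :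
    (cycleSq n).Adj x y := by
  rw [cycleSq, fromRel_adj]
  exact ⟨hne, Or.inl h⟩

def gfun (n : ℕ) : Option (ZMod 6) → ℕ → ℕ
  | none, m => 2 * m
  | some k, m =>
    if k.val = 0 then 1 else if k.val = 1 then 3 else if k.val = 2 then 5
    else if k.val = 3 then 6 else if k.val = 4 then 7 + m else n - 1

def glen (n : ℕ) : Option (ZMod 6) → ℕ
  | none => 2
  | some k => if k.val = 4 then n - 9 else 0

example : Function.Injective (ZMod.val (n := 6)) := ZMod.val_injective 6

theorem stmt9 (n : ℕ) (hn : 9 ≤ n) :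
    (wheel 6).IsMinorOf (cycleSq n) := by
  haveI : NeZero n := ⟨by omega⟩
  have hn1 : ((n - 1 : ℕ) : ZMod n) = -1 := by
    have h1 : (1:ℕ) ≤ n := by omega
    rw [Nat.cast_sub h1, ZMod.natCast_self]; ring
  have hn2 : ((n - 2 : ℕ) : ZMod n) = -2 := by
    have h2 : (2:ℕ) ≤ n := by omega
    rw [Nat.cast_sub h2, ZMod.natCast_self]; push_cast; ring
  set φ : Option (ZMod 6) → Set (ZMod n) :=
    fun w => (fun m : ℕ => ((gfun n w m : ℕ) : ZMod n)) '' Set.Iic (glen n w) with hφ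
  have hlt : ∀ w m, m ≤ glen n w → gfun n w m < n := by
    rintro (_ | k) m hm
    · have h2 : m ≤ 2 := hm
      show 2 * m < n; omega
    · have hv : k.val < 6 := ZMod.val_lt k
      simp only [gfun, glen] at hm ⊢
      split_ifs at hm ⊢ <;> omega
  have hval : ∀ w m, m ≤ glen n w → ((gfun n w m : ℕ) : ZMod n).val = gfun n w m :=
    fun w m hm => ZMod.val_cast_of_lt (hlt w m hm)
  have memg : ∀ w m, m ≤ glen n w → ((gfun n w m : ℕ) : ZMod n) ∈ φ w :=
    fun w m hm => ⟨m, Set.mem_Iic.mpr hm, rfl⟩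
  have mem' : ∀ w (a m : ℕ), m ≤ glen n w → gfun n w m = a → ((a : ℕ) : ZMod n) ∈ φ w :=
    fun w a m hm he => he ▸ memg w m hm
  refine ⟨φ, fun w => ⟨_, memg w 0 (Nat.zero_le _)⟩, ?conn, ?disj, ?adj⟩
  case conn =>
    intro w
    refine chain_connected _ _ _ ?_
    intro i hi
    rcases w with _ | k
    · have h2 : i < 2 := hi
      refine cadj (cne (hlt _ i (by exact h2.le)) (hlt _ (i+1) (by exact h2)) ?_) (Or.inr ?_)
      · show 2 * i ≠ 2 * (i+1); omega
      · show (((2*(i+1) : ℕ)) : ZMod n) = ((2*i : ℕ) : ZMod n) + 2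
        push_cast; ring
    · have hv : k.val < 6 := ZMod.val_lt k
      have h4 : k.val = 4 := by
        by_contra h
        have : glen n (some k) = 0 := by simp [glen, h]
        omega
      have hi' : i < n - 9 := by simpa [glen, h4] using hi
      have e1 : gfun n (some k) i = 7 + i := by simp [gfun, h4]
      have e2 : gfun n (some k) (i+1) = 7 + (i+1) := by simp [gfun, h4]
      rw [e1, e2]
      refine cadj (cne (by omega) (by omega) (by omega)) (Or.inl ?_)
      push_cast; ring
  case disj =>
    intro w1 w2 hne
    rw [Set.disjoint_left]
    rintro x ⟨m1, hm1, rfl⟩ ⟨m2, hm2, heq⟩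
    simp only [Set.mem_Iic] at hm1 hm2
    have e : gfun n w2 m2 = gfun n w1 m1 := by
      have := congrArg ZMod.val heq
      rwa [hval _ _ hm2, hval _ _ hm1] at this
    rcases w1 with _ | k1 <;> rcases w2 with _ | k2
    · exact hne rfl
    · have hv : k2.val < 6 := ZMod.val_lt k2
      have h1 : m1 ≤ 2 := hm1
      simp only [gfun, glen] at e hm2
      split_ifs at e hm2 <;> omega
    · have hv : k1.val < 6 := ZMod.val_lt k1
      have h2 : m2 ≤ 2 := hm2
      simp only [gfun, glen] at e hm1
      split_ifs at e hm1 <;> omega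
    · have hv1 : k1.val < 6 := ZMod.val_lt k1
      have hv2 : k2.val < 6 := ZMod.val_lt k2
      have hvne : k1.val ≠ k2.val := fun h => hne (congrArg some (ZMod.val_injective 6 h))
      simp only [gfun, glen] at e hm1 hm2
      split_ifs at e hm1 hm2 <;> omega
  case adj =>
    have key : ∀ (w1 w2 : Option (ZMod 6)),
        ((w1 = none ∧ w2 ≠ none) ∨ (∃ i j : ZMod 6, w1 = some i ∧ w2 = some j ∧ j = i + 1)) →
        ∃ a ∈ φ w1, ∃ b ∈ φ w2, (cycleSq n).Adj a b := by
      rintro w1 w2 (⟨rfl, h2⟩ | ⟨i, j, rfl, rfl, rfl⟩)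
      · rcases w2 with _ | k
        · exact absurd rfl h2
        · have hv : k.val < 6 := ZMod.val_lt k
          have hv6 : k.val = 0 ∨ k.val = 1 ∨ k.val = 2 ∨ k.val = 3 ∨ k.val = 4 ∨ k.val = 5 := by
            omega
          rcases hv6 with hv0 | hv0 | hv0 | hv0 | hv0 | hv0
          · refine ⟨_, mem' none 0 0 (Nat.zero_le _) (by simp [gfun]),
              _, mem' (some k) 1 0 (Nat.zero_le _) (by simp [gfun, hv0]),
              cadj (cne (by omega) (by omega) (by omega)) (Or.inl (by push_cast; ring))⟩
          · refine ⟨_, mem' none 2 1 (by simp [glen]) (by simp [gfun]),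
              _, mem' (some k) 3 0 (Nat.zero_le _) (by simp [gfun, hv0]),
              cadj (cne (by omega) (by omega) (by omega)) (Or.inl (by push_cast; ring))⟩
          · refine ⟨_, mem' none 4 2 (by simp [glen]) (by simp [gfun]),
              _, mem' (some k) 5 0 (Nat.zero_le _) (by simp [gfun, hv0]),
              cadj (cne (by omega) (by omega) (by omega)) (Or.inl (by push_cast; ring))⟩
          · refine ⟨_, mem' none 4 2 (by simp [glen]) (by simp [gfun]),
              _, mem' (some k) 6 0 (Nat.zero_le _) (by simp [gfun, hv0]),
              cadj (cne (by omega) (by omega) (by omega)) (Or.inr (by push_cast; ring))⟩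
          · refine ⟨_, mem' none 0 0 (Nat.zero_le _) (by simp [gfun]),
              _, mem' (some k) (n-2) (n-9) (by simp [glen, hv0]) (by simp [gfun, hv0]; omega),
              Adj.symm (cadj (cne (by omega) (by omega) (by omega)) (Or.inr ?_))⟩
            rw [hn2]; push_cast; ring
          · refine ⟨_, mem' none 0 0 (Nat.zero_le _) (by simp [gfun]),
              _, mem' (some k) (n-1) 0 (Nat.zero_le _) (by simp [gfun, hv0]),
              Adj.symm (cadj (cne (by omega) (by omega) (by omega)) (Or.inl ?_))⟩
            rw [hn1]; push_cast; ring
      · have hv : i.val < 6 := ZMod.val_lt i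
        have hj : (i + 1).val = (i.val + 1) % 6 := by
          rw [ZMod.val_add, show (1 : ZMod 6).val = 1 from rfl]
        have hv6 : i.val = 0 ∨ i.val = 1 ∨ i.val = 2 ∨ i.val = 3 ∨ i.val = 4 ∨ i.val = 5 := by
          omega
        rcases hv6 with hv0 | hv0 | hv0 | hv0 | hv0 | hv0 <;>
          rw [hv0] at hj <;> norm_num at hj
        · exact ⟨_, mem' (some i) 1 0 (Nat.zero_le _) (by simp [gfun, hv0]),
            _, mem' (some (i+1)) 3 0 (Nat.zero_le _) (by simp [gfun, hj]),
            cadj (cne (by omega) (by omega) (by omega)) (Or.inr (by push_cast; ring))⟩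
        · exact ⟨_, mem' (some i) 3 0 (Nat.zero_le _) (by simp [gfun, hv0]),
            _, mem' (some (i+1)) 5 0 (Nat.zero_le _) (by simp [gfun, hj]),
            cadj (cne (by omega) (by omega) (by omega)) (Or.inr (by push_cast; ring))⟩
        · exact ⟨_, mem' (some i) 5 0 (Nat.zero_le _) (by simp [gfun, hv0]),
            _, mem' (some (i+1)) 6 0 (Nat.zero_le _) (by simp [gfun, hj]),
            cadj (cne (by omega) (by omega) (by omega)) (Or.inl (by push_cast; ring))⟩
        · exact ⟨_, mem' (some i) 6 0 (Nat.zero_le _) (by simp [gfun, hv0]),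
            _, mem' (some (i+1)) 7 0 (Nat.zero_le _) (by simp [gfun, hj]),
            cadj (cne (by omega) (by omega) (by omega)) (Or.inl (by push_cast; ring))⟩
        · refine ⟨_, mem' (some i) (n-2) (n-9) (by simp [glen, hv0]) (by simp [gfun, hv0]; omega),
            _, mem' (some (i+1)) (n-1) 0 (Nat.zero_le _) (by simp [gfun, hj]),
            cadj (cne (by omega) (by omega) (by omega)) (Or.inl ?_)⟩
          rw [hn1, hn2]; ring
        · refine ⟨_, mem' (some i) (n-1) 0 (Nat.zero_le _) (by simp [gfun, hv0]),
            _, mem' (some (i+1)) 1 0 (Nat.zero_le _) (by simp [gfun, hj]),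
            cadj (cne (by omega) (by omega) (by omega)) (Or.inr ?_)⟩
          rw [hn1]; push_cast; ring
    intro w1 w2 h
    rw [wheel, fromRel_adj] at h
    obtain ⟨-, h | h⟩ := h
    · exact key _ _ h
    · obtain ⟨a, ha, b, hb, hab⟩ := key _ _ h
      exact ⟨b, hb, a, ha, hab.symm⟩
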